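/- Let p > 2, w(s) := (cosh s)^{−2/(p−2)} and χ := w^{p/2}, i.e. χ(s) = (cosh s)^{−p/(p−2)}. Then ∫_ℝ |χ'(s)|² ds − (2p(p−1)/(p−2)²)·∫_ℝ w(s)^{2(p−1)} ds = −(p/(p−2))²·∫_ℝ w(s)^{p} ds, all integrals being finite. -/

import Mathlib

/-! With `c = p / (p - 2)` one has `w ^ p = cosh ^ (-2c)`, `w ^ (2(p - 1)) = cosh ^ (-(2c + 2))`,
`χ'² = c² (cosh ^ (-2c) - cosh ^ (-(2c + 2)))` (as `sinh² = cosh² - 1`) and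
`2p(p - 1)/(p - 2)² = c (c + 1)`. The identity thus reduces to the reduction formula
`(b + 1) ∫ cosh ^ (-(b + 2)) = b ∫ cosh ^ (-b)` at `b = 2c`, which is the fundamental theorem of
calculus for `sinh · cosh ^ (-(b + 1))`, a function vanishing at `±∞`. -/

open MeasureTheory Real

/-- `w(s) = (cosh s)^{-2/(p-2)}` -/
noncomputable def wOpt (p : ℝ) : ℝ → ℝ := fun s => Real.cosh s ^ (-(2 / (p - 2)))

/-- `χ(s) = w(s)^{p/2} = (cosh s)^{-p/(p-2)}` -/
noncomputable def chiOpt (p : ℝ) : ℝ → ℝ := fun s => Real.cosh s ^ (-(p / (p - 2)))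

open Filter Set Topology

namespace Real

lemma mul_rpow_neg_add_one {x : ℝ} (hx : x ≠ 0) (b : ℝ) : x * x ^ (-(b + 1)) = x ^ (-b) := by
  rw [show -b = -(b + 1) + 1 by ring, rpow_add_one hx]
  ring

lemma sq_mul_rpow_neg_add_two {x : ℝ} (hx : x ≠ 0) (b : ℝ) :
    x ^ 2 * x ^ (-(b + 2)) = x ^ (-b) := by
  rw [show -b = -(b + 2) + 1 + 1 by ring, rpow_add_one hx, rpow_add_one hx]
  ring

lemma exp_div_two_le_cosh (x : ℝ) : exp x / 2 ≤ cosh x := by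
  rw [cosh_eq]
  linarith [exp_pos (-x)]

lemma abs_sinh_le_cosh (x : ℝ) : |sinh x| ≤ cosh x := by
  rw [abs_sinh, ← cosh_abs x, sinh_eq, cosh_eq]
  linarith [exp_pos (-|x|)]

lemma tendsto_cosh_atTop : Tendsto cosh atTop atTop :=
  tendsto_atTop_mono exp_div_two_le_cosh (tendsto_exp_atTop.atTop_div_const two_pos)

lemma tendsto_cosh_atBot : Tendsto cosh atBot atTop := by
  simpa [Function.comp_def] using tendsto_cosh_atTop.comp tendsto_neg_atBot_atTop

lemma hasDerivAt_cosh_rpow (c x : ℝ) :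
    HasDerivAt (fun x => cosh x ^ c) (c * sinh x * cosh x ^ (c - 1)) x := by
  convert (hasDerivAt_cosh x).rpow_const (p := c) (Or.inl (cosh_pos x).ne') using 1
  ring

lemma integrable_cosh_rpow_neg {b : ℝ} (hb : 0 < b) : Integrable fun x => cosh x ^ (-b) := by
  have hcont : Continuous fun x => cosh x ^ (-b) :=
    continuous_cosh.rpow_const fun x => Or.inl (cosh_pos x).ne'
  refine hcont.locallyIntegrable.integrable_of_isBigO_atTop_of_norm_isNegInvariant
    (g := fun x => exp (-b * x)) ?_ ?_ ⟨Ioi 0, Ioi_mem_atTop 0, exp_neg_integrableOn_Ioi 0 hb⟩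
  · filter_upwards with x
    simp [cosh_neg]
  · refine Asymptotics.IsBigO.of_bound (2 ^ b) (Eventually.of_forall fun x => ?_)
    rw [norm_of_nonneg (rpow_nonneg (cosh_pos x).le _), norm_of_nonneg (exp_pos _).le]
    calc cosh x ^ (-b) ≤ (exp x / 2) ^ (-b) :=
          rpow_le_rpow_of_nonpos (by positivity) (exp_div_two_le_cosh x) (by linarith)
      _ = 2 ^ b * exp (-b * x) := by
          rw [div_rpow (exp_pos x).le zero_le_two, ← exp_mul, rpow_neg zero_le_two,
            div_inv_eq_mul, mul_comm x, mul_comm]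

lemma integral_cosh_rpow_neg_add_two {b : ℝ} (hb : 0 < b) :
    (b + 1) * ∫ x, cosh x ^ (-(b + 2)) = b * ∫ x, cosh x ^ (-b) := by
  set F : ℝ → ℝ := fun x => sinh x * cosh x ^ (-(b + 1))
  have hint₂ := (integrable_cosh_rpow_neg (b := b + 2) (by linarith)).const_mul (b + 1)
  have hint₀ := (integrable_cosh_rpow_neg hb).const_mul b
  have hderiv (x : ℝ) :
      HasDerivAt F ((b + 1) * cosh x ^ (-(b + 2)) - b * cosh x ^ (-b)) x := by
    refine ((hasDerivAt_sinh x).mul (hasDerivAt_cosh_rpow (-(b + 1)) x)).congr_deriv ?_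
    have hc := (cosh_pos x).ne'
    rw [show -(b + 1) - 1 = -(b + 2) by ring, mul_rpow_neg_add_one hc,
      ← sq_mul_rpow_neg_add_two hc b, cosh_sq]
    ring
  have hbound (x : ℝ) : ‖F x‖ ≤ cosh x ^ (-b) := by
    rw [norm_mul, norm_eq_abs, norm_of_nonneg (rpow_nonneg (cosh_pos x).le _),
      ← mul_rpow_neg_add_one (cosh_pos x).ne' b]
    exact mul_le_mul_of_nonneg_right (abs_sinh_le_cosh x) (rpow_nonneg (cosh_pos x).le _)
  have hdecay := tendsto_rpow_neg_atTop hb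
  have := integral_of_hasDerivAt_of_tendsto hderiv (hint₂.sub hint₀)
    (squeeze_zero_norm hbound (hdecay.comp tendsto_cosh_atBot))
    (squeeze_zero_norm hbound (hdecay.comp tendsto_cosh_atTop))
  rwa [integral_sub hint₂ hint₀, integral_const_mul, integral_const_mul, sub_self,
    sub_eq_zero] at this

lemma sq_deriv_cosh_rpow_neg (c x : ℝ) :
    deriv (fun x => cosh x ^ (-c)) x ^ 2 =
      c ^ 2 * (cosh x ^ (-(2 * c)) - cosh x ^ (-(2 * c + 2))) := by
  have hc := cosh_pos x
  rw [(hasDerivAt_cosh_rpow (-c) x).deriv, ← sq_mul_rpow_neg_add_two hc.ne' (2 * c)]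
  have hsq : (cosh x ^ (-c - 1)) ^ 2 = cosh x ^ (-(2 * c + 2)) := by
    rw [sq, ← rpow_add hc]
    ring_nf
  linear_combination c ^ 2 * cosh x ^ (-(2 * c + 2)) * sinh_sq x + (c * sinh x) ^ 2 * hsq

end Real

lemma wOpt_rpow (p a s : ℝ) : wOpt p s ^ a = cosh s ^ (-(2 / (p - 2) * a)) := by
  rw [wOpt, ← rpow_mul (cosh_pos s).le, neg_mul]

/-- The integral identity
`∫ |χ'|² - (2p(p-1)/(p-2)²) ∫ w^{2(p-1)} = -(p/(p-2))² ∫ w^p`,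
all integrals being finite. -/
theorem chi_integral_identity (p : ℝ) (hp : 2 < p) :
    Integrable (fun s : ℝ => (deriv (chiOpt p) s) ^ 2) ∧
    Integrable (fun s : ℝ => wOpt p s ^ (2 * (p - 1))) ∧
    Integrable (fun s : ℝ => wOpt p s ^ p) ∧
    (∫ s : ℝ, (deriv (chiOpt p) s) ^ 2) -
        2 * p * (p - 1) / (p - 2) ^ 2 * (∫ s : ℝ, wOpt p s ^ (2 * (p - 1))) =
      -((p / (p - 2)) ^ 2) * ∫ s : ℝ, wOpt p s ^ p := by
  set c := p / (p - 2) with hc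
  have hp₂ : p - 2 ≠ 0 := by linarith
  have hc₀ : 0 < c := div_pos (by linarith) (by linarith)
  have hwp : (fun s => wOpt p s ^ p) = fun s => cosh s ^ (-(2 * c)) := by
    ext s; rw [wOpt_rpow, hc]; congr 2; field_simp
  have hw : (fun s => wOpt p s ^ (2 * (p - 1))) = fun s => cosh s ^ (-(2 * c + 2)) := by
    ext s; rw [wOpt_rpow, hc]; congr 2; field_simp; ring
  have hχ : (fun s => deriv (chiOpt p) s ^ 2) =
      fun s => c ^ 2 * (cosh s ^ (-(2 * c)) - cosh s ^ (-(2 * c + 2))) :=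
    funext (sq_deriv_cosh_rpow_neg c)
  have hcoef : 2 * p * (p - 1) / (p - 2) ^ 2 = c * (c + 1) := by
    rw [hc]; field_simp; ring
  have hI₀ := integrable_cosh_rpow_neg (b := 2 * c) (by positivity)
  have hI₂ := integrable_cosh_rpow_neg (b := 2 * c + 2) (by positivity)
  have hrec := integral_cosh_rpow_neg_add_two (b := 2 * c) (by positivity)
  refine ⟨hχ ▸ (hI₀.sub hI₂).const_mul _, hw ▸ hI₂, hwp ▸ hI₀, ?_⟩
  rw [hχ, hw, hwp, hcoef, integral_const_mul, integral_sub hI₀ hI₂]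
  linear_combination (-c) * hrec
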